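/- Let A be a k-linear semi-Hopf category with object class X. For x, y, z ∈ X let can^z_{x,y} : A_{z,x} ⊗_k A_{x,y} → A_{z,y} ⊗_k A_{x,y} be the k-linear map determined by can^z_{x,y}(a ⊗ b) = a b_(1) ⊗ b_(2). Then the following are equivalent: (1) A admits an antipode, i.e., there exist k-linear maps S_{x,y} : A_{x,y} → A_{y,x} with h_(1) S_{x,y}(h_(2)) = ε_{x,y}(h) 1_x and S_{x,y}(h_(1)) h_(2) = ε_{x,y}(h) 1_y for all h ∈ A_{x,y}; (2) can^z_{x,y} is bijective for all x, y, z ∈ X; (3) can^x_{x,y} and can^y_{x,y} are bijective for all x, y ∈ X. -/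
import Mathlib


open TensorProduct

/-- The canonical map `can^z_{x,y} : A_{z,x} ⊗ A_{x,y} → A_{z,y} ⊗ A_{x,y}`,
`a ⊗ b ↦ a b₍₁₎ ⊗ b₍₂₎`. -/
noncomputable def canMap
    {k : Type*} [CommRing k] {X : Type*}
    (A : X → X → Type*)
    [∀ x y, AddCommGroup (A x y)] [∀ x y, Module k (A x y)]
    (Δ : ∀ x y, A x y →ₗ[k] A x y ⊗[k] A x y)
    (mul : ∀ x y z, A x y →ₗ[k] A y z →ₗ[k] A x z)
    (z x y : X) :
    (A z x ⊗[k] A x y) →ₗ[k] (A z y ⊗[k] A x y) :=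
  (TensorProduct.map (TensorProduct.lift (mul z x y)) LinearMap.id)
    ∘ₗ (TensorProduct.assoc k (A z x) (A x y) (A x y)).symm.toLinearMap
    ∘ₗ (TensorProduct.map LinearMap.id (Δ x y))

section Toolkit

variable {k : Type*} [CommRing k]
variable {M N P Q R C V W : Type*}
  [AddCommGroup M] [Module k M] [AddCommGroup N] [Module k N]
  [AddCommGroup P] [Module k P] [AddCommGroup Q] [Module k Q]
  [AddCommGroup R] [Module k R] [AddCommGroup C] [Module k C]
  [AddCommGroup V] [Module k V] [AddCommGroup W] [Module k W]

lemma mapmap (f : M →ₗ[k] P) (g : N →ₗ[k] Q) (f' : R →ₗ[k] M) (g' : V →ₗ[k] N) (t : R ⊗[k] V) :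
    TensorProduct.map f g (TensorProduct.map f' g' t)
      = TensorProduct.map (f ∘ₗ f') (g ∘ₗ g') t := by
  rw [TensorProduct.map_comp]; rfl

lemma lift_assoc_symm (B : P →ₗ[k] Q →ₗ[k] R) (c : P) (t : Q ⊗[k] N) :
    TensorProduct.map (TensorProduct.lift B) LinearMap.id
      ((TensorProduct.assoc k P Q N).symm (c ⊗ₜ[k] t))
      = TensorProduct.map (B c) LinearMap.id t := by
  induction t using TensorProduct.induction_on with
  | zero => simp
  | tmul u v => simp
  | add s t hs ht => simp only [tmul_add, map_add, hs, ht]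

noncomputable def genCan (Δc : C →ₗ[k] C ⊗[k] C) (B : P →ₗ[k] C →ₗ[k] R) :
    P ⊗[k] C →ₗ[k] R ⊗[k] C :=
  (TensorProduct.map (TensorProduct.lift B) LinearMap.id)
    ∘ₗ (TensorProduct.assoc k P C C).symm.toLinearMap
    ∘ₗ (TensorProduct.map LinearMap.id Δc)

lemma genCan_tmul (Δc : C →ₗ[k] C ⊗[k] C) (B : P →ₗ[k] C →ₗ[k] R) (c : P) (d : C) :
    genCan Δc B (c ⊗ₜ[k] d) = TensorProduct.map (B c) LinearMap.id (Δc d) := by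
  simp [genCan, lift_assoc_symm]

lemma genCan_map (Δc : C →ₗ[k] C ⊗[k] C) (B₂ : Q →ₗ[k] C →ₗ[k] R) (f : P →ₗ[k] Q) (t : P ⊗[k] C) :
    genCan Δc B₂ (TensorProduct.map f LinearMap.id t)
      = TensorProduct.map (TensorProduct.lift (B₂ ∘ₗ f)) LinearMap.id
          ((TensorProduct.assoc k P C C).symm (TensorProduct.map LinearMap.id Δc t)) := by
  induction t using TensorProduct.induction_on with
  | zero => simp
  | tmul u v => simp [genCan_tmul, lift_assoc_symm]
  | add s t hs ht => simp only [map_add, hs, ht]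

lemma genCan_genCan (Δc : C →ₗ[k] C ⊗[k] C)
    (hco : ∀ a : C, (TensorProduct.assoc k C C C)
        (TensorProduct.map Δc LinearMap.id (Δc a)) = TensorProduct.map LinearMap.id Δc (Δc a))
    (B₁ : P →ₗ[k] C →ₗ[k] Q) (B₂ : Q →ₗ[k] C →ₗ[k] R) (c : P) (d : C) :
    genCan Δc B₂ (genCan Δc B₁ (c ⊗ₜ[k] d))
      = TensorProduct.map (TensorProduct.lift (B₂ ∘ₗ B₁ c) ∘ₗ Δc) LinearMap.id (Δc d) := by
  rw [genCan_tmul, genCan_map, ← hco d, (TensorProduct.assoc k C C C).symm_apply_apply,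
    mapmap, LinearMap.id_comp]

lemma contract_right (ε' : C →ₗ[k] k) (f : C →ₗ[k] P) (t : C ⊗[k] C) :
    TensorProduct.rid k P
        (TensorProduct.map LinearMap.id ε' (TensorProduct.map f LinearMap.id t))
      = f (TensorProduct.rid k C (TensorProduct.map LinearMap.id ε' t)) := by
  induction t using TensorProduct.induction_on with
  | zero => simp
  | tmul p q => simp
  | add s t hs ht => simp only [map_add, hs, ht]

lemma smul_expand (ε' : C →ₗ[k] k) (c : P) (g : C →ₗ[k] P) (hg : ∀ u, g u = ε' u • c)
    (t : C ⊗[k] C) :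
    TensorProduct.map g LinearMap.id t
      = c ⊗ₜ[k] (TensorProduct.lid k C (TensorProduct.map ε' LinearMap.id t)) := by
  induction t using TensorProduct.induction_on with
  | zero => simp
  | tmul p q => simp [hg, smul_tmul]
  | add s t hs ht => simp only [map_add, hs, ht, tmul_add]

lemma genCan_left_inverse (Δc : C →ₗ[k] C ⊗[k] C) (ε' : C →ₗ[k] k)
    (hco : ∀ a : C, (TensorProduct.assoc k C C C)
        (TensorProduct.map Δc LinearMap.id (Δc a)) = TensorProduct.map LinearMap.id Δc (Δc a))
    (hcl : ∀ a : C, TensorProduct.lid k C (TensorProduct.map ε' LinearMap.id (Δc a)) = a)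
    (B₁ : P →ₗ[k] C →ₗ[k] Q) (B₂ : Q →ₗ[k] C →ₗ[k] P)
    (hkey : ∀ (c : P) (u : C), TensorProduct.lift (B₂ ∘ₗ B₁ c) (Δc u) = ε' u • c) :
    ∀ t, genCan Δc B₂ (genCan Δc B₁ t) = t := by
  intro t
  induction t using TensorProduct.induction_on with
  | zero => simp
  | tmul c d =>
    rw [genCan_genCan Δc hco,
      smul_expand ε' c _ (fun u => by rw [LinearMap.comp_apply]; exact hkey c u) (Δc d), hcl d]
  | add s t hs ht => simp only [map_add, hs, ht]

lemma assoc_tmul_map (f : M →ₗ[k] Q) (r : M ⊗[k] N) (v : P) :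
    (TensorProduct.assoc k Q N P) ((TensorProduct.map f LinearMap.id r) ⊗ₜ[k] v)
      = TensorProduct.map f LinearMap.id ((TensorProduct.assoc k M N P) (r ⊗ₜ[k] v)) := by
  induction r using TensorProduct.induction_on with
  | zero => simp
  | tmul p q => simp
  | add s t hs ht => simp only [map_add, add_tmul, hs, ht]

lemma map_comm_sides (f : M →ₗ[k] Q) (g : N →ₗ[k] P) (t : M ⊗[k] N) :
    TensorProduct.map f LinearMap.id (TensorProduct.map LinearMap.id g t)
      = TensorProduct.map LinearMap.id g (TensorProduct.map f LinearMap.id t) := by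
  rw [mapmap, mapmap, LinearMap.id_comp, LinearMap.comp_id, LinearMap.id_comp, LinearMap.comp_id]

lemma assoc_mk (m0 : M) (s : N ⊗[k] P) :
    (TensorProduct.assoc k M N P)
        (TensorProduct.map (TensorProduct.mk k M N m0) LinearMap.id s) = m0 ⊗ₜ[k] s := by
  induction s using TensorProduct.induction_on with
  | zero => simp
  | tmul p q => simp
  | add s t hs ht => simp only [map_add, hs, ht, tmul_add]

lemma contract_mid (ε' : C →ₗ[k] k) (g : M ⊗[k] C) (q : N) :
    TensorProduct.map LinearMap.id
        ((TensorProduct.lid k N).toLinearMap ∘ₗ TensorProduct.map ε' LinearMap.id)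
        ((TensorProduct.assoc k M C N) (g ⊗ₜ[k] q))
      = ((TensorProduct.rid k M) (TensorProduct.map LinearMap.id ε' g)) ⊗ₜ[k] q := by
  induction g using TensorProduct.induction_on with
  | zero => simp
  | tmul a b => simp [tmul_smul, smul_tmul']
  | add s t hs ht => simp only [map_add, add_tmul, hs, ht]

noncomputable def twMulGen (S : C →ₗ[k] W) (m : P →ₗ[k] W →ₗ[k] Q) : P →ₗ[k] C →ₗ[k] Q :=
  (LinearMap.lcomp k Q S) ∘ₗ m

lemma twMulGen_apply (S : C →ₗ[k] W) (m : P →ₗ[k] W →ₗ[k] Q) (c : P) (d : C) :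
    twMulGen S m c d = m c (S d) := rfl

end Toolkit

lemma canBij
    {k : Type*} [CommRing k] {X : Type*}
    (A : X → X → Type*)
    [∀ x y, AddCommGroup (A x y)] [∀ x y, Module k (A x y)]
    (Δ : ∀ x y, A x y →ₗ[k] A x y ⊗[k] A x y)
    (ε : ∀ x y, A x y →ₗ[k] k)
    (mul : ∀ x y z, A x y →ₗ[k] A y z →ₗ[k] A x z)
    (one : ∀ x, A x x)
    (coassoc : ∀ x y (a : A x y),
      (TensorProduct.assoc k (A x y) (A x y) (A x y))
          ((TensorProduct.map (Δ x y) LinearMap.id) (Δ x y a))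
        = (TensorProduct.map LinearMap.id (Δ x y)) (Δ x y a))
    (counit_left : ∀ x y (a : A x y),
      (TensorProduct.lid k (A x y)) ((TensorProduct.map (ε x y) LinearMap.id) (Δ x y a)) = a)
    (mul_assoc' : ∀ x y z w (a : A x y) (b : A y z) (c : A z w),
      mul x z w (mul x y z a b) c = mul x y w a (mul y z w b c))
    (mul_one' : ∀ x y (a : A x y), mul x y y a (one y) = a)
    (S : ∀ x y, A x y →ₗ[k] A y x)
    (hS : ∀ x y (h : A x y),
        (TensorProduct.lift (mul x y x)) ((TensorProduct.map LinearMap.id (S x y)) (Δ x y h))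
            = ε x y h • one x
          ∧ (TensorProduct.lift (mul y x y)) ((TensorProduct.map (S x y) LinearMap.id) (Δ x y h))
            = ε x y h • one y) :
    ∀ x y z, Function.Bijective (canMap A Δ mul z x y) := by
  intro x y z
  have hL : ∀ t, genCan (Δ x y) (twMulGen (S x y) (mul z y x))
      (genCan (Δ x y) (mul z x y) t) = t := by
    apply genCan_left_inverse (Δ x y) (ε x y) (coassoc x y) (counit_left x y)
    intro c u
    have hfac : ∀ s : A x y ⊗[k] A x y,
        TensorProduct.lift ((twMulGen (S x y) (mul z y x)) ∘ₗ (mul z x y c)) s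
          = mul z x x c (TensorProduct.lift (mul x y x)
              (TensorProduct.map LinearMap.id (S x y) s)) := by
      intro s
      induction s using TensorProduct.induction_on with
      | zero => simp
      | tmul u p => simp [twMulGen_apply, mul_assoc']
      | add s t hs ht => simp only [map_add, hs, ht]
    rw [hfac, (hS x y u).1, map_smul, mul_one']
  have hR : ∀ t, genCan (Δ x y) (mul z x y)
      (genCan (Δ x y) (twMulGen (S x y) (mul z y x)) t) = t := by
    apply genCan_left_inverse (Δ x y) (ε x y) (coassoc x y) (counit_left x y)
    intro c u
    have hfac : ∀ s : A x y ⊗[k] A x y,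
        TensorProduct.lift ((mul z x y) ∘ₗ (twMulGen (S x y) (mul z y x) c)) s
          = mul z y y c (TensorProduct.lift (mul y x y)
              (TensorProduct.map (S x y) LinearMap.id s)) := by
      intro s
      induction s using TensorProduct.induction_on with
      | zero => simp
      | tmul u p => simp [twMulGen_apply, mul_assoc']
      | add s t hs ht => simp only [map_add, hs, ht]
    rw [hfac, (hS x y u).2, map_smul, mul_one']
  exact Function.bijective_iff_has_inverse.mpr
    ⟨genCan (Δ x y) (twMulGen (S x y) (mul z y x)), hL, hR⟩


lemma pairAntipode
    {k : Type*} [CommRing k] {X : Type*}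
    (A : X → X → Type*)
    [∀ x y, AddCommGroup (A x y)] [∀ x y, Module k (A x y)]
    (Δ : ∀ x y, A x y →ₗ[k] A x y ⊗[k] A x y)
    (ε : ∀ x y, A x y →ₗ[k] k)
    (mul : ∀ x y z, A x y →ₗ[k] A y z →ₗ[k] A x z)
    (one : ∀ x, A x x)
    (coassoc : ∀ x y (a : A x y),
      (TensorProduct.assoc k (A x y) (A x y) (A x y))
          ((TensorProduct.map (Δ x y) LinearMap.id) (Δ x y a))
        = (TensorProduct.map LinearMap.id (Δ x y)) (Δ x y a))
    (counit_left : ∀ x y (a : A x y),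
      (TensorProduct.lid k (A x y)) ((TensorProduct.map (ε x y) LinearMap.id) (Δ x y a)) = a)
    (counit_right : ∀ x y (a : A x y),
      (TensorProduct.rid k (A x y)) ((TensorProduct.map LinearMap.id (ε x y)) (Δ x y a)) = a)
    (mul_assoc' : ∀ x y z w (a : A x y) (b : A y z) (c : A z w),
      mul x z w (mul x y z a b) c = mul x y w a (mul y z w b c))
    (one_mul' : ∀ x y (a : A x y), mul x x y (one x) a = a)
    (mul_one' : ∀ x y (a : A x y), mul x y y a (one y) = a)
    (x y : X)
    (hx : Function.Bijective (canMap A Δ mul x x y))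
    (hy : Function.Bijective (canMap A Δ mul y x y)) :
    ∃ S : A x y →ₗ[k] A y x, ∀ (h : A x y),
        (TensorProduct.lift (mul x y x)) ((TensorProduct.map LinearMap.id S) (Δ x y h))
            = ε x y h • one x
          ∧ (TensorProduct.lift (mul y x y)) ((TensorProduct.map S LinearMap.id) (Δ x y h))
            = ε x y h • one y := by
  classical
  have hcan : ∀ (c : A y x) (d : A x y), canMap A Δ mul y x y (c ⊗ₜ[k] d)
      = TensorProduct.map (mul y x y c) LinearMap.id (Δ x y d) :=
    fun c d => genCan_tmul (Δ x y) (mul y x y) c d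
  set e : (A y x ⊗[k] A x y) ≃ₗ[k] (A y y ⊗[k] A x y) :=
    LinearEquiv.ofBijective _ hy with he
  have heapp : ∀ t, e t = canMap A Δ mul y x y t := fun t => rfl
  set γ : A x y →ₗ[k] A y x ⊗[k] A x y :=
    e.symm.toLinearMap ∘ₗ (TensorProduct.mk k (A y y) (A x y) (one y)) with hγ
  have hF1 : ∀ h : A x y, canMap A Δ mul y x y (γ h) = (one y) ⊗ₜ[k] h := by
    intro h
    have h0 : γ h = e.symm ((one y) ⊗ₜ[k] h) := rfl
    rw [h0, ← heapp]
    exact e.apply_symm_apply _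
  set Sxy : A x y →ₗ[k] A y x :=
    (TensorProduct.rid k (A y x)).toLinearMap
      ∘ₗ (TensorProduct.map LinearMap.id (ε x y)) ∘ₗ γ with hSxy
  -- F2
  have hμcan : ∀ t : A y x ⊗[k] A x y,
      TensorProduct.rid k (A y y)
        (TensorProduct.map LinearMap.id (ε x y) (canMap A Δ mul y x y t))
        = TensorProduct.lift (mul y x y) t := by
    intro t
    induction t using TensorProduct.induction_on with
    | zero => simp
    | tmul c d => rw [hcan, contract_right (ε x y) (mul y x y c) (Δ x y d), counit_right]; simp
    | add s t hs ht => simp only [map_add, hs, ht]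
  have hF2 : ∀ h : A x y, TensorProduct.lift (mul y x y) (γ h) = ε x y h • one y := by
    intro h
    rw [← hμcan, hF1]
    simp
  -- comodule property of can
  have hD : ∀ t : A y x ⊗[k] A x y,
      (TensorProduct.assoc k (A y y) (A x y) (A x y))
          (TensorProduct.map (canMap A Δ mul y x y) LinearMap.id
            ((TensorProduct.assoc k (A y x) (A x y) (A x y)).symm
              (TensorProduct.map LinearMap.id (Δ x y) t)))
        = TensorProduct.map LinearMap.id (Δ x y) (canMap A Δ mul y x y t) := by
    intro t
    induction t using TensorProduct.induction_on with
    | zero => simp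
    | add s t hs ht => simp only [map_add, hs, ht]
    | tmul c d =>
      have hD1 : ∀ s : A x y ⊗[k] A x y,
          (TensorProduct.assoc k (A y y) (A x y) (A x y))
              (TensorProduct.map (canMap A Δ mul y x y) LinearMap.id
                ((TensorProduct.assoc k (A y x) (A x y) (A x y)).symm (c ⊗ₜ[k] s)))
            = TensorProduct.map (mul y x y c) LinearMap.id
                ((TensorProduct.assoc k (A x y) (A x y) (A x y))
                  (TensorProduct.map (Δ x y) LinearMap.id s)) := by
        intro s
        induction s using TensorProduct.induction_on with
        | zero => simp
        | add s t hs ht => simp only [tmul_add, map_add, hs, ht]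
        | tmul u v =>
          rw [assoc_symm_tmul, map_tmul, hcan, LinearMap.id_coe, id_eq,
            assoc_tmul_map, map_tmul, LinearMap.id_coe, id_eq]
      rw [map_tmul, LinearMap.id_coe, id_eq, hD1 (Δ x y d), coassoc x y d, hcan c d,
        map_comm_sides]
  -- injectivity of conjugated can
  have hmapinj : Function.Injective
      (TensorProduct.map (canMap A Δ mul y x y)
        (LinearMap.id : A x y →ₗ[k] A x y)) := by
    have hcongr : ∀ u, TensorProduct.map (canMap A Δ mul y x y)
        (LinearMap.id : A x y →ₗ[k] A x y) u
        = (TensorProduct.congr e (LinearEquiv.refl k (A x y))) u := by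
      intro u
      induction u using TensorProduct.induction_on with
      | zero => simp
      | tmul a b => simp [TensorProduct.congr_tmul, heapp]
      | add s t hs ht => simp only [map_add, hs, ht]
    intro a b hab
    apply (TensorProduct.congr e (LinearEquiv.refl k (A x y))).injective
    rw [← hcongr, ← hcongr, hab]
  have hii : ∀ h : A x y,
      TensorProduct.map LinearMap.id (Δ x y) (γ h)
        = (TensorProduct.assoc k (A y x) (A x y) (A x y))
            (TensorProduct.map γ LinearMap.id (Δ x y h)) := by
    intro h
    apply (TensorProduct.assoc k (A y x) (A x y) (A x y)).symm.injective
    apply hmapinj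
    apply (TensorProduct.assoc k (A y y) (A x y) (A x y)).injective
    rw [hD (γ h), hF1 h]
    rw [(TensorProduct.assoc k (A y x) (A x y) (A x y)).symm_apply_apply]
    rw [mapmap, LinearMap.id_comp]
    have hcanγ : (canMap A Δ mul y x y) ∘ₗ γ
        = (TensorProduct.mk k (A y y) (A x y)) (one y) := LinearMap.ext hF1
    rw [hcanγ, assoc_mk, map_tmul, LinearMap.id_coe, id_eq]
  -- F3
  have hωΔ : ∀ t : A y x ⊗[k] A x y,
      TensorProduct.map LinearMap.id
          ((TensorProduct.lid k (A x y)).toLinearMap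
            ∘ₗ TensorProduct.map (ε x y) LinearMap.id)
          (TensorProduct.map LinearMap.id (Δ x y) t) = t := by
    intro t
    rw [mapmap, LinearMap.id_comp]
    have hid : (TensorProduct.lid k (A x y)).toLinearMap
        ∘ₗ TensorProduct.map (ε x y) LinearMap.id ∘ₗ Δ x y = LinearMap.id := by
      apply LinearMap.ext
      intro a
      simpa using counit_left x y a
    rw [show ((TensorProduct.lid k (A x y)).toLinearMap
        ∘ₗ TensorProduct.map (ε x y) LinearMap.id) ∘ₗ Δ x y
        = (TensorProduct.lid k (A x y)).toLinearMap
          ∘ₗ TensorProduct.map (ε x y) LinearMap.id ∘ₗ Δ x y from rfl, hid,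
      TensorProduct.map_id, LinearMap.id_coe, id_eq]
  have hF3 : ∀ h : A x y, γ h = TensorProduct.map Sxy LinearMap.id (Δ x y h) := by
    intro h
    have h1 := congrArg (TensorProduct.map LinearMap.id
      ((TensorProduct.lid k (A x y)).toLinearMap
        ∘ₗ TensorProduct.map (ε x y) LinearMap.id)) (hii h)
    rw [hωΔ (γ h)] at h1
    rw [h1]
    have hM2 : ∀ s : A x y ⊗[k] A x y,
        TensorProduct.map LinearMap.id
            ((TensorProduct.lid k (A x y)).toLinearMap
              ∘ₗ TensorProduct.map (ε x y) LinearMap.id)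
            ((TensorProduct.assoc k (A y x) (A x y) (A x y))
              (TensorProduct.map γ LinearMap.id s))
          = TensorProduct.map Sxy LinearMap.id s := by
      intro s
      induction s using TensorProduct.induction_on with
      | zero => simp
      | add s t hs ht => simp only [map_add, hs, ht]
      | tmul p q =>
        rw [map_tmul, LinearMap.id_coe, id_eq, contract_mid (ε x y) (γ p) q, map_tmul,
          LinearMap.id_coe, id_eq]
        rfl
    exact hM2 (Δ x y h)
  -- axiom 2
  have hax2 : ∀ h : A x y, TensorProduct.lift (mul y x y)
      (TensorProduct.map Sxy LinearMap.id (Δ x y h)) = ε x y h • one y := by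
    intro h; rw [← hF3, hF2]
  -- axiom 1
  have hcomp : ∀ t : A x y ⊗[k] A x y,
      canMap A Δ mul x x y (genCan (Δ x y) (twMulGen Sxy (mul x y x)) t) = t := by
    apply genCan_left_inverse (Δ x y) (ε x y) (coassoc x y) (counit_left x y)
    intro c u
    have hfac : ∀ s : A x y ⊗[k] A x y,
        TensorProduct.lift ((mul x x y) ∘ₗ (twMulGen Sxy (mul x y x) c)) s
          = mul x y y c (TensorProduct.lift (mul y x y)
              (TensorProduct.map Sxy LinearMap.id s)) := by
      intro s
      induction s using TensorProduct.induction_on with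
      | zero => simp
      | tmul u p => simp [twMulGen_apply, mul_assoc']
      | add s t hs ht => simp only [map_add, hs, ht]
    rw [hfac, hax2 u, map_smul, mul_one']
  have hax1 : ∀ h : A x y, TensorProduct.lift (mul x y x)
      (TensorProduct.map LinearMap.id Sxy (Δ x y h)) = ε x y h • one x := by
    intro h
    have hνΔ : genCan (Δ x y) (twMulGen Sxy (mul x y x)) (Δ x y h)
        = (one x) ⊗ₜ[k] h := by
      apply hx.1
      rw [hcomp (Δ x y h)]
      rw [show canMap A Δ mul x x y ((one x) ⊗ₜ[k] h)
          = TensorProduct.map (mul x x y (one x)) LinearMap.id (Δ x y h) from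
        genCan_tmul (Δ x y) (mul x x y) (one x) h]
      rw [show mul x x y (one x) = LinearMap.id from LinearMap.ext (one_mul' x y),
        TensorProduct.map_id, LinearMap.id_coe, id_eq]
    have hgen : ∀ s : A x y ⊗[k] A x y,
        TensorProduct.rid k (A x x) (TensorProduct.map LinearMap.id (ε x y)
          (genCan (Δ x y) (twMulGen Sxy (mul x y x)) s))
          = TensorProduct.lift (mul x y x) (TensorProduct.map LinearMap.id Sxy s) := by
      intro s
      induction s using TensorProduct.induction_on with
      | zero => simp
      | add s t hs ht => simp only [map_add, hs, ht]
      | tmul c d =>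
        rw [genCan_tmul, contract_right (ε x y) (twMulGen Sxy (mul x y x) c) (Δ x y d),
          counit_right]
        simp [twMulGen_apply]
    have := hgen (Δ x y h)
    rw [hνΔ] at this
    rw [← this]
    simp
  exact ⟨Sxy, fun h => ⟨hax1 h, hax2 h⟩⟩

theorem antipode_iff_canonical_maps_bijective
    {k : Type*} [CommRing k] {X : Type*}
    (A : X → X → Type*)
    [∀ x y, AddCommGroup (A x y)] [∀ x y, Module k (A x y)]
    (Δ : ∀ x y, A x y →ₗ[k] A x y ⊗[k] A x y)
    (ε : ∀ x y, A x y →ₗ[k] k)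
    (mul : ∀ x y z, A x y →ₗ[k] A y z →ₗ[k] A x z)
    (one : ∀ x, A x x)
    (coassoc : ∀ x y (a : A x y),
      (TensorProduct.assoc k (A x y) (A x y) (A x y))
          ((TensorProduct.map (Δ x y) LinearMap.id) (Δ x y a))
        = (TensorProduct.map LinearMap.id (Δ x y)) (Δ x y a))
    (counit_left : ∀ x y (a : A x y),
      (TensorProduct.lid k (A x y)) ((TensorProduct.map (ε x y) LinearMap.id) (Δ x y a)) = a)
    (counit_right : ∀ x y (a : A x y),
      (TensorProduct.rid k (A x y)) ((TensorProduct.map LinearMap.id (ε x y)) (Δ x y a)) = a)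
    (mul_assoc' : ∀ x y z w (a : A x y) (b : A y z) (c : A z w),
      mul x z w (mul x y z a b) c = mul x y w a (mul y z w b c))
    (one_mul' : ∀ x y (a : A x y), mul x x y (one x) a = a)
    (mul_one' : ∀ x y (a : A x y), mul x y y a (one y) = a)
    (Δ_mul : ∀ x y z (a : A x y) (b : A y z),
      Δ x z (mul x y z a b)
        = (TensorProduct.map (TensorProduct.lift (mul x y z)) (TensorProduct.lift (mul x y z)))
            ((TensorProduct.tensorTensorTensorComm k (A x y) (A x y) (A y z) (A y z))
              ((Δ x y a) ⊗ₜ[k] (Δ y z b))))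
    (ε_mul : ∀ x y z (a : A x y) (b : A y z),
      ε x z (mul x y z a b) = ε x y a * ε y z b)
    (Δ_one : ∀ x, Δ x x (one x) = (one x) ⊗ₜ[k] (one x))
    (ε_one : ∀ x, ε x x (one x) = 1)
 :
    ((∃ S : ∀ x y, A x y →ₗ[k] A y x,
        ∀ x y (h : A x y),
          (TensorProduct.lift (mul x y x)) ((TensorProduct.map LinearMap.id (S x y)) (Δ x y h))
              = ε x y h • one x
            ∧ (TensorProduct.lift (mul y x y)) ((TensorProduct.map (S x y) LinearMap.id) (Δ x y h))
              = ε x y h • one y)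
      ↔ (∀ x y z, Function.Bijective (canMap A Δ mul z x y)))
    ∧ ((∀ x y z, Function.Bijective (canMap A Δ mul z x y))
      ↔ (∀ x y, Function.Bijective (canMap A Δ mul x x y)
          ∧ Function.Bijective (canMap A Δ mul y x y)))  := by
  have L2 : (∀ x y, Function.Bijective (canMap A Δ mul x x y)
        ∧ Function.Bijective (canMap A Δ mul y x y)) →
      (∃ S : ∀ x y, A x y →ₗ[k] A y x,
        ∀ x y (h : A x y),
          (TensorProduct.lift (mul x y x)) ((TensorProduct.map LinearMap.id (S x y)) (Δ x y h))
              = ε x y h • one x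
            ∧ (TensorProduct.lift (mul y x y)) ((TensorProduct.map (S x y) LinearMap.id) (Δ x y h))
              = ε x y h • one y) := by
    intro h3
    have hpair := fun x y => pairAntipode A Δ ε mul one coassoc counit_left counit_right
      mul_assoc' one_mul' mul_one' x y (h3 x y).1 (h3 x y).2
    choose S hS using hpair
    exact ⟨S, hS⟩
  have L1 : (∃ S : ∀ x y, A x y →ₗ[k] A y x,
        ∀ x y (h : A x y),
          (TensorProduct.lift (mul x y x)) ((TensorProduct.map LinearMap.id (S x y)) (Δ x y h))
              = ε x y h • one x
            ∧ (TensorProduct.lift (mul y x y)) ((TensorProduct.map (S x y) LinearMap.id) (Δ x y h))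
              = ε x y h • one y) →
      ∀ x y z, Function.Bijective (canMap A Δ mul z x y) := by
    rintro ⟨S, hS⟩
    exact canBij A Δ ε mul one coassoc counit_left mul_assoc' mul_one' S hS
  exact ⟨⟨L1, fun hb => L2 (fun x y => ⟨hb x y x, hb x y y⟩)⟩,
    ⟨fun hb x y => ⟨hb x y x, hb x y y⟩, fun h3 => L1 (L2 h3)⟩⟩
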